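/- Let X be an abelian surface (so ε = 0, and (x,x) < 0 for 0 ≠ x ∈ H^⊥ ∩ NS_ℝ). Let v be a Mukai vector with ⟨v²⟩ > 0 and d_β(v) ≥ 0, and v₁ ∉ ℚv with v₂ := v − v₁. Suppose Z_{(β,ω)}(v₁) and Z_{(β,ω)}(v₂) are ℝ-linearly dependent with both in the semi-closed upper half plane ℍ ∪ ℝ_{<0}. Then ⟨v₁²⟩ ≥ 0 and ⟨v₂²⟩ ≥ 0 imply ⟨v₁,v₂⟩ > 0. (Numerical wall criterion, direction (I) of the Proposition.) -/

import Mathlib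

variable {N : Type*} [AddCommGroup N] [Module ℚ N]

/-- The Mukai pairing on the rational Mukai lattice `Λ_ℚ = ℚ × N × ℚ`,
`⟨x,y⟩ = (x₁,y₁) − x₀y₂ − x₂y₀`. -/
def mpair (B : N →ₗ[ℚ] N →ₗ[ℚ] ℚ) (x y : ℚ × N × ℚ) : ℚ :=
  B x.2.1 y.2.1 - x.1 * y.2.2 - x.2.2 * y.1

/-- `e^β = (1, β, (β,β)/2)`. -/
def mexp (B : N →ₗ[ℚ] N →ₗ[ℚ] ℚ) (β : N) : ℚ × N × ℚ :=
  (1, β, B β β / 2)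

/-- The fundamental class `ϱ`. -/
def mrho : ℚ × N × ℚ := (0, 0, 1)

/-- `r_β(v) = −⟨v,ϱ⟩`. -/
def rInv (B : N →ₗ[ℚ] N →ₗ[ℚ] ℚ) (v : ℚ × N × ℚ) : ℚ :=
  -(mpair B v mrho)

/-- `a_β(v) = −⟨v, e^β⟩`. -/
def aInv (B : N →ₗ[ℚ] N →ₗ[ℚ] ℚ) (β : N) (v : ℚ × N × ℚ) : ℚ :=
  -(mpair B v (mexp B β))

/-- `d_β(v) = ⟨v, H + (H,β)ϱ⟩ / (H,H)`. -/
def dInv (B : N →ₗ[ℚ] N →ₗ[ℚ] ℚ) (H β : N) (v : ℚ × N × ℚ) : ℚ :=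
  mpair B v (0, H, B H β) / B H H

/-- `D_β(v)`, the `H`-orthogonal part of the `NS`-component of `v`. -/
def DInv (B : N →ₗ[ℚ] N →ₗ[ℚ] ℚ) (H β : N) (v : ℚ × N × ℚ) : N :=
  v.2.1 - rInv B v • β - dInv B H β v • H

/-- The stability function `Z_{(β,ω)}(v) = ⟨e^{β+iω}, v⟩` with `ω = t•H`,
expanded as `⟨e^β,v⟩ + i⟨ω + (ω,β)ϱ, v⟩ − ((ω,ω)/2)⟨ϱ,v⟩`. -/
noncomputable def Zst (B : N →ₗ[ℚ] N →ₗ[ℚ] ℚ) (H β : N) (t : ℚ)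
    (v : ℚ × N × ℚ) : ℂ :=
  ((mpair B (mexp B β) v : ℚ) : ℂ)
    + ((mpair B (0, t • H, B (t • H) β) v : ℚ) : ℂ) * Complex.I
    - ((B (t • H) (t • H) / 2 : ℚ) : ℂ) * ((mpair B mrho v : ℚ) : ℂ)

/-!
Two `ℝ`-dependent values of `Z` in `ℍ ∪ ℝ_{<0}` are positive multiples of each other,
`Z(v₁) = c Z(v₂)` with `c > 0`, and `c` is rational. Then `w = v₁ − c v₂` is nonzero (as
`v₁ ∉ ℚv`) and lies in the kernel of `Z`, on which the Mukai pairing is negative definite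
(Hodge index on `H^⊥`). Hence `0 > ⟨w²⟩ = ⟨v₁²⟩ − 2c⟨v₁,v₂⟩ + c²⟨v₂²⟩`, which forces
`⟨v₁,v₂⟩ > 0` when `⟨v₁²⟩, ⟨v₂²⟩ ≥ 0`.
-/

def semiclosedUpperHalfPlane : Set ℂ := {z | 0 < z.im ∨ (z.im = 0 ∧ z.re < 0)}

lemma ne_zero_of_mem_semiclosedUpperHalfPlane {z : ℂ} (hz : z ∈ semiclosedUpperHalfPlane) :
    z ≠ 0 := by
  rintro rfl
  rcases hz with h | ⟨-, h⟩ <;> simp at h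

lemma exists_pos_smul_eq_of_not_linearIndependent {z₁ z₂ : ℂ}
    (hz₁ : z₁ ∈ semiclosedUpperHalfPlane) (hz₂ : z₂ ∈ semiclosedUpperHalfPlane)
    (hdep : ¬ LinearIndependent ℝ ![z₁, z₂]) : ∃ c : ℝ, 0 < c ∧ z₁ = c • z₂ := by
  rw [linearIndependent_fin2] at hdep
  push Not at hdep
  obtain ⟨c, hc⟩ := hdep (ne_zero_of_mem_semiclosedUpperHalfPlane hz₂)
  simp only [Matrix.cons_val_zero, Matrix.cons_val_one] at hc
  subst hc
  refine ⟨c, ?_, rfl⟩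
  have hc₀ : c ≠ 0 := by
    rintro rfl
    exact ne_zero_of_mem_semiclosedUpperHalfPlane hz₁ (zero_smul ℝ z₂)
  simp only [semiclosedUpperHalfPlane, Set.mem_ofPred_eq, Complex.real_smul, Complex.mul_im,
    Complex.mul_re, Complex.ofReal_re, Complex.ofReal_im, zero_mul, add_zero, sub_zero]
    at hz₁ hz₂
  rcases hz₂ with him | ⟨him, hre⟩
  · rcases hz₁ with h | ⟨h, -⟩
    · exact pos_of_mul_pos_left h him.le
    · exact absurd h (mul_ne_zero hc₀ him.ne')
  · rcases hz₁ with h | ⟨-, h⟩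
    · simp [him] at h
    · nlinarith

lemma exists_ratCast_eq_of_mk_eq_smul_mk {a₁ b₁ a₂ b₂ : ℚ} {c : ℝ} (hne : (a₂, b₂) ≠ 0)
    (h : (⟨a₁, b₁⟩ : ℂ) = c • (⟨a₂, b₂⟩ : ℂ)) : ∃ q : ℚ, (q : ℝ) = c := by
  have hre : (a₁ : ℝ) = c * a₂ := by simpa using congrArg Complex.re h
  have him : (b₁ : ℝ) = c * b₂ := by simpa using congrArg Complex.im h
  by_cases ha : a₂ = 0
  · have hb : (b₂ : ℝ) ≠ 0 := by
      rintro hb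
      exact hne (Prod.ext ha (by exact_mod_cast hb))
    exact ⟨b₁ / b₂, by push_cast; field_simp; linarith⟩
  · have ha' : (a₂ : ℝ) ≠ 0 := by exact_mod_cast ha
    exact ⟨a₁ / a₂, by push_cast; field_simp; linarith⟩

section MukaiLattice

variable (B : N →ₗ[ℚ] N →ₗ[ℚ] ℚ) (H β : N)

lemma mpair_sub_smul_self (hB : ∀ a b : N, B a b = B b a) (c : ℚ) (x y : ℚ × N × ℚ) :
    mpair B (x - c • y) (x - c • y)
      = mpair B x x - 2 * c * mpair B x y + c ^ 2 * mpair B y y := by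
  simp only [mpair, Prod.fst_sub, Prod.snd_sub, Prod.smul_fst, Prod.smul_snd,
    map_sub, map_smul, LinearMap.sub_apply, LinearMap.smul_apply, smul_eq_mul]
  rw [hB y.2.1 x.2.1]
  ring

lemma rInv_eq (u : ℚ × N × ℚ) : rInv B u = u.1 := by
  simp [rInv, mpair, mrho]

lemma DInv_orthogonal (hB : ∀ a b : N, B a b = B b a) (hH : B H H ≠ 0) (u : ℚ × N × ℚ) :
    B (DInv B H β u) H = 0 := by
  simp only [DInv, dInv, rInv_eq, mpair, map_sub, map_smul, LinearMap.sub_apply,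
    LinearMap.smul_apply, smul_eq_mul]
  rw [hB β H]
  field_simp
  ring

/-- The orthogonal decomposition of the Mukai form along `e^β`, `H` and `H^⊥`. -/
lemma mpair_self_eq (hB : ∀ a b : N, B a b = B b a) (hH : B H H ≠ 0) (u : ℚ × N × ℚ) :
    mpair B u u = B (DInv B H β u) (DInv B H β u)
      + dInv B H β u ^ 2 * B H H - 2 * u.1 * aInv B β u := by
  simp only [DInv, dInv, aInv, rInv_eq, mpair, mexp, map_sub, map_smul,
    LinearMap.sub_apply, LinearMap.smul_apply, smul_eq_mul]
  rw [hB β H, hB H u.2.1, hB β u.2.1]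
  field_simp
  ring

lemma eq_zero_of_invariants_eq_zero (u : ℚ × N × ℚ) (hr : u.1 = 0) (hd : dInv B H β u = 0)
    (hD : DInv B H β u = 0) (ha : aInv B β u = 0) : u = 0 := by
  obtain ⟨r, D, a⟩ := u
  obtain rfl : r = 0 := hr
  obtain rfl : D = 0 := by simpa [DInv, rInv_eq, hd] using hD
  obtain rfl : a = 0 := by simpa [aInv, mpair, mexp] using ha
  rfl

variable (t : ℚ)

lemma Zst_eq_mk (hB : ∀ a b : N, B a b = B b a) (hH : B H H ≠ 0) (u : ℚ × N × ℚ) :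
    Zst B H β t u = ⟨((-aInv B β u + t ^ 2 * B H H / 2 * u.1 : ℚ) : ℝ),
      ((t * B H H * dInv B H β u : ℚ) : ℝ)⟩ := by
  apply Complex.ext
  · simp only [Zst, aInv, mpair, mexp, mrho, map_smul, map_zero, LinearMap.smul_apply,
      LinearMap.zero_apply, smul_eq_mul, Complex.sub_re, Complex.add_re, Complex.mul_re,
      Complex.I_re, Complex.I_im, Complex.ratCast_re, Complex.ratCast_im]
    rw [hB β u.2.1]
    push_cast
    ring
  · simp only [Zst, dInv, mpair, map_smul, LinearMap.smul_apply, smul_eq_mul,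
      Complex.sub_im, Complex.add_im, Complex.mul_im, Complex.I_re, Complex.I_im,
      Complex.ratCast_re, Complex.ratCast_im]
    rw [hB H u.2.1]
    push_cast
    field_simp
    ring

lemma Zst_sub_smul (x y : ℚ × N × ℚ) (c : ℚ) :
    Zst B H β t (x - c • y) = Zst B H β t x - c * Zst B H β t y := by
  simp only [Zst, mpair, Prod.fst_sub, Prod.snd_sub, Prod.smul_fst, Prod.smul_snd,
    map_sub, map_smul, smul_eq_mul]
  push_cast
  ring

/-- `Z(u) = 0` forces `d_β(u) = 0` and `a_β(u) = (ω²/2) r(u)`, so `⟨u²⟩ = (D,D) − ω² r²`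
with `(D,D) ≤ 0`. -/
lemma mpair_self_neg_of_Zst_eq_zero (hB : ∀ a b : N, B a b = B b a) (hH : 0 < B H H)
    (hneg : ∀ x : N, B x H = 0 → x ≠ 0 → B x x < 0) (ht : t ≠ 0) {u : ℚ × N × ℚ}
    (hZ : Zst B H β t u = 0) (hu : u ≠ 0) : mpair B u u < 0 := by
  rw [Zst_eq_mk B H β t hB hH.ne'] at hZ
  have hre : aInv B β u = t ^ 2 * B H H / 2 * u.1 := by
    have h := congrArg Complex.re hZ
    simp only [Complex.zero_re] at h
    have h' : -aInv B β u + t ^ 2 * B H H / 2 * u.1 = 0 := by exact_mod_cast h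
    linarith
  have hd : dInv B H β u = 0 := by
    have h := congrArg Complex.im hZ
    simp only [Complex.zero_im] at h
    have him : t * B H H * dInv B H β u = 0 := by exact_mod_cast h
    simpa [ht, hH.ne'] using him
  have hk : 0 < t ^ 2 * B H H / 2 := by positivity
  have hDD : B (DInv B H β u) (DInv B H β u) ≤ 0 := by
    by_cases hD : DInv B H β u = 0
    · simp [hD]
    · exact (hneg _ (DInv_orthogonal B H β hB hH.ne' u) hD).le
  rw [mpair_self_eq B H β hB hH.ne', hd, hre]
  by_cases hr : u.1 = 0
  · have hD : DInv B H β u ≠ 0 := fun hD ↦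
      hu (eq_zero_of_invariants_eq_zero B H β u hr hd hD (by simp [hre, hr]))
    have := hneg _ (DInv_orthogonal B H β hB hH.ne' u) hD
    rw [hr]
    linarith
  · have : 0 < u.1 ^ 2 := by positivity
    nlinarith [mul_pos hk this]

lemma exists_rat_pos_Zst_eq_mul (hB : ∀ a b : N, B a b = B b a) (hH : B H H ≠ 0)
    {x y : ℚ × N × ℚ} (hx : Zst B H β t x ∈ semiclosedUpperHalfPlane)
    (hy : Zst B H β t y ∈ semiclosedUpperHalfPlane)
    (hdep : ¬ LinearIndependent ℝ ![Zst B H β t x, Zst B H β t y]) :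
    ∃ c : ℚ, 0 < c ∧ Zst B H β t x = c * Zst B H β t y := by
  obtain ⟨c, hc, hxy⟩ := exists_pos_smul_eq_of_not_linearIndependent hx hy hdep
  have hy₀ := ne_zero_of_mem_semiclosedUpperHalfPlane hy
  rw [Zst_eq_mk B H β t hB hH x, Zst_eq_mk B H β t hB hH y] at hxy
  rw [Zst_eq_mk B H β t hB hH y] at hy₀
  have hy₁ : (-aInv B β y + t ^ 2 * B H H / 2 * y.1, t * B H H * dInv B H β y) ≠ 0 := by
    intro h
    simp only [Prod.mk_eq_zero] at h
    exact hy₀ (Complex.ext (by simp [h.1]) (by simp [h.2]))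
  obtain ⟨q, rfl⟩ := exists_ratCast_eq_of_mk_eq_smul_mk hy₁ hxy
  refine ⟨q, by exact_mod_cast hc, ?_⟩
  rw [Zst_eq_mk B H β t hB hH, Zst_eq_mk B H β t hB hH, hxy, Complex.real_smul]
  norm_cast

end MukaiLattice

theorem wall_criterion_necessity_general (B : N →ₗ[ℚ] N →ₗ[ℚ] ℚ)
    (hB : ∀ a b : N, B a b = B b a) (H : N) (hH : 0 < B H H)
    (hneg : ∀ x : N, B x H = 0 → x ≠ 0 → B x x < 0)
    (β : N) (t : ℚ) (ht : 0 < t)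
    (v v₁ : ℚ × N × ℚ)
    (hnotQ : ∀ q0 : ℚ, v₁ ≠ q0 • v)
    (hdep : ¬ LinearIndependent ℝ ![Zst B H β t v₁, Zst B H β t (v - v₁)])
    (hH1 : 0 < (Zst B H β t v₁).im ∨
      ((Zst B H β t v₁).im = 0 ∧ (Zst B H β t v₁).re < 0))
    (hH2 : 0 < (Zst B H β t (v - v₁)).im ∨
      ((Zst B H β t (v - v₁)).im = 0 ∧ (Zst B H β t (v - v₁)).re < 0)) :
    0 ≤ mpair B v₁ v₁ → 0 ≤ mpair B (v - v₁) (v - v₁) →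
      0 < mpair B v₁ (v - v₁) := by
  intro hS₁ hS₂
  obtain ⟨c, hc, hZ⟩ := exists_rat_pos_Zst_eq_mul B H β t hB hH.ne' hH1 hH2 hdep
  have hw : v₁ - c • (v - v₁) ≠ 0 := by
    intro h
    refine hnotQ (c / (1 + c)) ?_
    have h' : (1 + c) • v₁ = c • v := by
      calc (1 + c) • v₁ = (v₁ - c • (v - v₁)) + c • v := by module
        _ = c • v := by rw [h, zero_add]
    rw [div_eq_inv_mul, mul_smul, ← h', inv_smul_smul₀ (by positivity)]
  have hker : Zst B H β t (v₁ - c • (v - v₁)) = 0 := by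
    rw [Zst_sub_smul, hZ, sub_self]
  have hw_neg := mpair_self_neg_of_Zst_eq_zero B H β t hB hH hneg ht.ne' hker hw
  rw [mpair_sub_smul_self B hB] at hw_neg
  nlinarith [mul_nonneg (sq_nonneg c) hS₂]

/-- Wall criterion, direction (I): on an abelian surface, if `⟨v²⟩ > 0`,
`d_β(v) ≥ 0`, `v₁ ∉ ℚv`, and `Z(v₁), Z(v − v₁)` are `ℝ`-linearly dependent
with both values in `ℍ ∪ ℝ_{<0}`, then `⟨v₁²⟩ ≥ 0` and `⟨v₂²⟩ ≥ 0` imply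
`⟨v₁,v₂⟩ > 0`, where `v₂ = v − v₁`. -/
theorem wall_criterion_necessity (B : N →ₗ[ℚ] N →ₗ[ℚ] ℚ)
    (hB : ∀ a b : N, B a b = B b a) (H : N) (hH : 0 < B H H)
    (hneg : ∀ x : N, B x H = 0 → x ≠ 0 → B x x < 0)
    (β : N) (t : ℚ) (ht : 0 < t)
    (v v₁ : ℚ × N × ℚ)
    (hv2 : 0 < mpair B v v) (hdv : 0 ≤ dInv B H β v)
    (hnotQ : ∀ q0 : ℚ, v₁ ≠ q0 • v)
    (hdep : ¬ LinearIndependent ℝ ![Zst B H β t v₁, Zst B H β t (v - v₁)])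
    (hH1 : 0 < (Zst B H β t v₁).im ∨
      ((Zst B H β t v₁).im = 0 ∧ (Zst B H β t v₁).re < 0))
    (hH2 : 0 < (Zst B H β t (v - v₁)).im ∨
      ((Zst B H β t (v - v₁)).im = 0 ∧ (Zst B H β t (v - v₁)).re < 0)) :
    0 ≤ mpair B v₁ v₁ → 0 ≤ mpair B (v - v₁) (v - v₁) →
      0 < mpair B v₁ (v - v₁) :=
  wall_criterion_necessity_general B hB H hH hneg β t ht v v₁ hnotQ hdep hH1 hH2
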